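/- arXiv:2512.06748 — 4 statements merged into one kernel-verified Lean document; each statement's English description precedes it below -/
import Mathlib

section
/- Define h : (1,∞) → ℝ by h(x) = ((x+1)/2)·log₂((x+1)/2) − ((x−1)/2)·log₂((x−1)/2). Let T ∈ (0,1) and w > T be real constants and define λ_het(V) = V·w/(T·V + w). Then for every V > w/(w−T) one has λ_het(V) > 1, and the function V ↦ −h(λ_het(V)) is convex on the interval (w/(w−T), ∞). -/
open Real Set

/-- Composition of a concave monotone function with a concave function is concave. -/
lemma stmt13_concave_comp {f g : ℝ → ℝ} {s t : Set ℝ}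
    (hg : ConcaveOn ℝ t g) (hg' : MonotoneOn g t)
    (hf : ConcaveOn ℝ s f) (hmem : ∀ x ∈ s, f x ∈ t) :
    ConcaveOn ℝ s (g ∘ f) :=
  ⟨hf.1, fun x hx y hy a b ha hb hab =>
    (hg.2 (hmem _ hx) (hmem _ hy) ha hb hab).trans <|
      hg' (hg.1 (hmem _ hx) (hmem _ hy) ha hb hab)
        (hmem _ (hf.1 hx hy ha hb hab)) (hf.2 hx hy ha hb hab)⟩

/-- First derivative of the bosonic entropy function. -/
lemma stmt13_hF' {x : ℝ} (hx : 1 < x) :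
    HasDerivAt (fun x : ℝ => ((x + 1) / 2) * Real.logb 2 ((x + 1) / 2)
      - ((x - 1) / 2) * Real.logb 2 ((x - 1) / 2))
      ((Real.log ((x + 1) / 2) - Real.log ((x - 1) / 2)) / (2 * Real.log 2)) x := by
  have hl2 : Real.log 2 ≠ 0 := by
    have := Real.log_pos (by norm_num : (1:ℝ) < 2); linarith
  have h1 : HasDerivAt (fun x : ℝ => (x + 1) / 2) (1 / 2) x := by
    simpa using ((hasDerivAt_id x).add_const 1).div_const 2
  have h2 : HasDerivAt (fun x : ℝ => (x - 1) / 2) (1 / 2) x := by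
    simpa using ((hasDerivAt_id x).sub_const 1).div_const 2
  have hp1 : (x + 1) / 2 ≠ 0 := by positivity
  have hp2 : (x - 1) / 2 ≠ 0 := by
    have : 0 < (x - 1) / 2 := by linarith
    linarith
  have A := (Real.hasDerivAt_mul_log hp1).comp x h1
  have B := (Real.hasDerivAt_mul_log hp2).comp x h2
  have C := (A.sub B).div_const (Real.log 2)
  have hfun : (fun x : ℝ => ((x + 1) / 2) * Real.logb 2 ((x + 1) / 2)
      - ((x - 1) / 2) * Real.logb 2 ((x - 1) / 2))
      = fun x : ℝ => ((fun x : ℝ => (x + 1) / 2 * Real.log ((x + 1) / 2)) x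
        - (fun x : ℝ => (x - 1) / 2 * Real.log ((x - 1) / 2)) x) / Real.log 2 := by
    funext y
    simp only [Real.logb]
    ring
  rw [hfun]
  refine C.congr_deriv ?_
  ring

/-- Second derivative of the bosonic entropy function. -/
lemma stmt13_hF'' {x : ℝ} (hx : 1 < x) :
    HasDerivAt (fun x : ℝ =>
        (Real.log ((x + 1) / 2) - Real.log ((x - 1) / 2)) / (2 * Real.log 2))
      ((1 / (x + 1) - 1 / (x - 1)) / (2 * Real.log 2)) x := by
  have h1 : HasDerivAt (fun x : ℝ => (x + 1) / 2) (1 / 2) x := by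
    simpa using ((hasDerivAt_id x).add_const 1).div_const 2
  have h2 : HasDerivAt (fun x : ℝ => (x - 1) / 2) (1 / 2) x := by
    simpa using ((hasDerivAt_id x).sub_const 1).div_const 2
  have hp1 : (x + 1) / 2 ≠ 0 := by positivity
  have hp2 : (x - 1) / 2 ≠ 0 := by
    have : 0 < (x - 1) / 2 := by linarith
    linarith
  have A := (Real.hasDerivAt_log hp1).comp x h1
  have B := (Real.hasDerivAt_log hp2).comp x h2
  have C := (A.sub B).div_const (2 * Real.log 2)
  have hx1 : x + 1 ≠ 0 := by linarith
  have hx2 : x - 1 ≠ 0 := by intro hc; rw [sub_eq_zero] at hc; linarith [hc]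
  refine C.congr_deriv ?_
  field_simp

/-- Convexity of `−h(λ_het)` in the modulation variance: with the bosonic entropy
function `h` and the large-modulation conditional symplectic eigenvalue
`λ_het(V) = V·w/(T·V + w)` of the NOMA-CVQKD system (`T ∈ (0,1)`, `w > T`), we have
`λ_het(V) > 1` for every `V > w/(w−T)`, and `V ↦ −h(λ_het(V))` is convex
on `(w/(w−T), ∞)`. -/
theorem stmt13 (h : ℝ → ℝ)
    (hh : ∀ x : ℝ, h x = ((x + 1) / 2) * Real.logb 2 ((x + 1) / 2)
        - ((x - 1) / 2) * Real.logb 2 ((x - 1) / 2))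
    (T w : ℝ) (hT : T ∈ Set.Ioo (0 : ℝ) 1) (hw : T < w)
    (lamHet : ℝ → ℝ) (hlam : ∀ V : ℝ, lamHet V = V * w / (T * V + w)) :
    (∀ V : ℝ, w / (w - T) < V → 1 < lamHet V) ∧
    ConvexOn ℝ (Set.Ioi (w / (w - T))) (fun V : ℝ => -h (lamHet V)) := by
  obtain ⟨hT0, hT1⟩ := hT
  have hw0 : 0 < w := lt_trans hT0 hw
  have hwT : 0 < w - T := by linarith
  set a : ℝ := w / (w - T) with ha
  have ha0 : 0 < a := div_pos hw0 hwT
  have hhfun : h = fun x : ℝ => ((x + 1) / 2) * Real.logb 2 ((x + 1) / 2)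
      - ((x - 1) / 2) * Real.logb 2 ((x - 1) / 2) := funext hh
  have hlamfun : lamHet = fun V : ℝ => V * w / (T * V + w) := funext hlam
  subst hhfun hlamfun
  -- positivity of the denominator on the domain
  have hden : ∀ V : ℝ, a < V → 0 < T * V + w := by
    intro V hV
    have hV0 : 0 < V := lt_trans ha0 hV
    nlinarith
  -- Part 1
  have part1 : ∀ V : ℝ, a < V → 1 < V * w / (T * V + w) := by
    intro V hV
    have hd := hden V hV
    rw [lt_div_iff₀ hd]
    have : w < V * (w - T) := (div_lt_iff₀ hwT).mp hV
    nlinarith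
  refine ⟨part1, ?_⟩
  have hlog2 : 0 < Real.log 2 := Real.log_pos (by norm_num)
  -- concavity of h on Ioi 1
  have hconc : ConcaveOn ℝ (Set.Ioi (1 : ℝ)) (fun x : ℝ =>
      ((x + 1) / 2) * Real.logb 2 ((x + 1) / 2)
        - ((x - 1) / 2) * Real.logb 2 ((x - 1) / 2)) := by
    apply concaveOn_of_hasDerivWithinAt2_nonpos (convex_Ioi 1)
      (f' := fun x => (Real.log ((x + 1) / 2) - Real.log ((x - 1) / 2)) / (2 * Real.log 2))
      (f'' := fun x => (1 / (x + 1) - 1 / (x - 1)) / (2 * Real.log 2))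
    · exact fun x hx => (stmt13_hF' hx).continuousAt.continuousWithinAt
    · intro x hx
      rw [interior_Ioi] at hx
      exact (stmt13_hF' hx).hasDerivWithinAt
    · intro x hx
      rw [interior_Ioi] at hx
      exact (stmt13_hF'' hx).hasDerivWithinAt
    · intro x hx
      rw [interior_Ioi] at hx
      have hx' : 1 < x := hx
      have h1 : (0:ℝ) < x - 1 := by linarith
      have h2 : (1:ℝ) / (x + 1) ≤ 1 / (x - 1) :=
        one_div_le_one_div_of_le h1 (by linarith)
      apply div_nonpos_of_nonpos_of_nonneg (by linarith) (by positivity)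
  -- monotonicity of h on Ioi 1
  have hmono : MonotoneOn (fun x : ℝ =>
      ((x + 1) / 2) * Real.logb 2 ((x + 1) / 2)
        - ((x - 1) / 2) * Real.logb 2 ((x - 1) / 2)) (Set.Ioi (1 : ℝ)) := by
    apply StrictMonoOn.monotoneOn
    apply strictMonoOn_of_deriv_pos (convex_Ioi 1)
      (fun x hx => (stmt13_hF' hx).continuousAt.continuousWithinAt)
    intro x hx
    rw [interior_Ioi] at hx
    have hx' : 1 < x := hx
    rw [(stmt13_hF' hx).deriv]
    have h1 : (0:ℝ) < (x - 1) / 2 := by linarith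
    have h2 : Real.log ((x - 1) / 2) < Real.log ((x + 1) / 2) :=
      Real.log_lt_log h1 (by linarith)
    apply div_pos (by linarith) (by positivity)
  -- concavity of lamHet on Ioi a
  have lamconc : ConcaveOn ℝ (Set.Ioi a) (fun V : ℝ => V * w / (T * V + w)) := by
    have hder : ∀ V : ℝ, a < V →
        HasDerivAt (fun V : ℝ => V * w / (T * V + w)) (w ^ 2 / (T * V + w) ^ 2) V := by
      intro V hV
      have hd := hden V hV
      have hu : HasDerivAt (fun V : ℝ => V * w) w V := by
        simpa using (hasDerivAt_id V).mul_const w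
      have hv : HasDerivAt (fun V : ℝ => T * V + w) T V := by
        simpa using ((hasDerivAt_id V).const_mul T).add_const w
      have := hu.div hv (ne_of_gt hd)
      refine this.congr_deriv ?_
      field_simp [hd.ne']
      ring
    have hder2 : ∀ V : ℝ, a < V →
        HasDerivAt (fun V : ℝ => w ^ 2 / (T * V + w) ^ 2)
          (-(2 * T * w ^ 2) / (T * V + w) ^ 3) V := by
      intro V hV
      have hd := hden V hV
      have hv : HasDerivAt (fun V : ℝ => T * V + w) T V := by
        simpa using ((hasDerivAt_id V).const_mul T).add_const w
      have hv2 : HasDerivAt (fun V : ℝ => (T * V + w) ^ 2) (2 * (T * V + w) * T) V := by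
        refine (hv.pow 2).congr_deriv ?_
        ring
      have := (hasDerivAt_const V (w ^ 2)).div hv2 (by positivity)
      refine this.congr_deriv ?_
      field_simp [hd.ne']
      ring
    apply concaveOn_of_hasDerivWithinAt2_nonpos (convex_Ioi a)
      (f' := fun V => w ^ 2 / (T * V + w) ^ 2)
      (f'' := fun V => -(2 * T * w ^ 2) / (T * V + w) ^ 3)
    · exact fun V hV => (hder V hV).continuousAt.continuousWithinAt
    · intro V hV
      rw [interior_Ioi] at hV
      exact (hder V hV).hasDerivWithinAt
    · intro V hV
      rw [interior_Ioi] at hV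
      exact (hder2 V hV).hasDerivWithinAt
    · intro V hV
      rw [interior_Ioi] at hV
      have hd := hden V hV
      apply div_nonpos_of_nonpos_of_nonneg (neg_nonpos.mpr (by positivity)) (by positivity)
  -- assemble
  have hcomp := stmt13_concave_comp hconc hmono lamconc
    (fun V hV => part1 V hV)
  exact hcomp.neg
end

section
/- Define h : (1,∞) → ℝ by h(x) = ((x+1)/2)·log₂((x+1)/2) − ((x−1)/2)·log₂((x−1)/2). Let b > 0 and c > 1 be real constants, and define g(V) = c·V/√(V² + b²). Then for every V > b/√(c²−1) one has g(V) > 1, and the function V ↦ h(g(V)) is concave on the interval (b/√(c²−1), ∞). -/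
lemma hasDerivAt_gAux (b c V : ℝ) (hb : 0 < b) :
    HasDerivAt (fun V => c * V / Real.sqrt (V ^ 2 + b ^ 2))
      (c * b ^ 2 / ((V ^ 2 + b ^ 2) * Real.sqrt (V ^ 2 + b ^ 2))) V := by
  have hu : 0 < V ^ 2 + b ^ 2 := by positivity
  have h1 : HasDerivAt (fun V : ℝ => V ^ 2 + b ^ 2) (2 * V) V := by
    simpa using (hasDerivAt_pow 2 V).add_const (b ^ 2)
  have h2 : HasDerivAt (fun V : ℝ => Real.sqrt (V ^ 2 + b ^ 2))
      (1 / (2 * Real.sqrt (V ^ 2 + b ^ 2)) * (2 * V)) V :=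
    (Real.hasDerivAt_sqrt hu.ne').comp V h1
  have h3 : HasDerivAt (fun V : ℝ => c * V) c V := by
    simpa using (hasDerivAt_id V).const_mul c
  have hs : Real.sqrt (V ^ 2 + b ^ 2) ≠ 0 := by positivity
  have hsq : Real.sqrt (V ^ 2 + b ^ 2) ^ 2 = V ^ 2 + b ^ 2 := Real.sq_sqrt hu.le
  have h4 : HasDerivAt (fun V => c * V / Real.sqrt (V ^ 2 + b ^ 2)) _ V := h3.div h2 hs
  convert h4 using 1
  field_simp
  linear_combination (-c * V ^ 2) * hsq

lemma hasDerivAt_hAux (x : ℝ) (hx : 1 < x) :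
    HasDerivAt (fun x : ℝ => ((x + 1) / 2) * Real.logb 2 ((x + 1) / 2)
        - ((x - 1) / 2) * Real.logb 2 ((x - 1) / 2))
      ((Real.log ((x + 1) / 2) - Real.log ((x - 1) / 2)) / (2 * Real.log 2)) x := by
  have h1 : (0:ℝ) < (x + 1) / 2 := by linarith
  have h2 : (0:ℝ) < (x - 1) / 2 := by linarith
  have hlin1 : HasDerivAt (fun x : ℝ => (x + 1) / 2) (1 / 2) x := by
    simpa using ((hasDerivAt_id x).add_const 1).div_const 2
  have hlin2 : HasDerivAt (fun x : ℝ => (x - 1) / 2) (1 / 2) x := by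
    simpa using ((hasDerivAt_id x).sub_const 1).div_const 2
  have hT1 : HasDerivAt (fun x : ℝ => ((x + 1) / 2) * Real.log ((x + 1) / 2))
      ((Real.log ((x + 1) / 2) + 1) * (1 / 2)) x :=
    by have := (Real.hasDerivAt_mul_log h1.ne').comp x hlin1; exact this
  have hT2 : HasDerivAt (fun x : ℝ => ((x - 1) / 2) * Real.log ((x - 1) / 2))
      ((Real.log ((x - 1) / 2) + 1) * (1 / 2)) x :=
    by have := (Real.hasDerivAt_mul_log h2.ne').comp x hlin2; exact this
  have heq : (fun x : ℝ => ((x + 1) / 2) * Real.logb 2 ((x + 1) / 2)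
        - ((x - 1) / 2) * Real.logb 2 ((x - 1) / 2))
      = fun x : ℝ => (((x + 1) / 2) * Real.log ((x + 1) / 2)
        - ((x - 1) / 2) * Real.log ((x - 1) / 2)) / Real.log 2 := by
    funext y
    simp only [Real.logb]
    ring
  rw [heq]
  have : HasDerivAt (fun x : ℝ => (((x + 1) / 2) * Real.log ((x + 1) / 2)
        - ((x - 1) / 2) * Real.log ((x - 1) / 2)) / Real.log 2) _ x :=
    (hT1.sub hT2).div_const (Real.log 2)
  convert this using 1
  have hl2 : Real.log 2 ≠ 0 := ne_of_gt (Real.log_pos (by norm_num))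
  field_simp
  ring

lemma logdiff_eq (z : ℝ) (hz : 1 < z) :
    Real.log ((z + 1) / 2) - Real.log ((z - 1) / 2) = Real.log ((z + 1) / (z - 1)) := by
  rw [← Real.log_div (by positivity) (ne_of_gt (by linarith : (0:ℝ) < (z - 1) / 2))]
  congr 1
  have : z - 1 ≠ 0 := by linarith
  field_simp

/-- Concavity of `h(λ̃₂)` in the modulation variance: with the bosonic entropy
function `h` and the large-modulation symplectic eigenvalue `g(V) = c·V/√(V² + b²)`
of the NOMA-CVQKD system (`b > 0`, `c > 1`), we have `g(V) > 1` for every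
`V > b/√(c² − 1)`, and `V ↦ h(g(V))` is concave on `(b/√(c² − 1), ∞)`. -/
theorem stmt15 (h : ℝ → ℝ)
    (hh : ∀ x : ℝ, h x = ((x + 1) / 2) * Real.logb 2 ((x + 1) / 2)
        - ((x - 1) / 2) * Real.logb 2 ((x - 1) / 2))
    (b c : ℝ) (hb : 0 < b) (hc : 1 < c)
    (g : ℝ → ℝ) (hg : ∀ V : ℝ, g V = c * V / Real.sqrt (V ^ 2 + b ^ 2)) :
    (∀ V : ℝ, b / Real.sqrt (c ^ 2 - 1) < V → 1 < g V) ∧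
    ConcaveOn ℝ (Set.Ioi (b / Real.sqrt (c ^ 2 - 1))) (fun V : ℝ => h (g V)) := by
  have hEq : h = fun x : ℝ => ((x + 1) / 2) * Real.logb 2 ((x + 1) / 2)
      - ((x - 1) / 2) * Real.logb 2 ((x - 1) / 2) := funext hh
  have gEq : g = fun V : ℝ => c * V / Real.sqrt (V ^ 2 + b ^ 2) := funext hg
  subst hEq gEq
  have hc2 : (0:ℝ) < c ^ 2 - 1 := by nlinarith
  have hsc : 0 < Real.sqrt (c ^ 2 - 1) := Real.sqrt_pos.mpr hc2
  set V₀ : ℝ := b / Real.sqrt (c ^ 2 - 1) with hV₀def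
  have hV₀pos : 0 < V₀ := div_pos hb hsc
  -- Part 1
  have part1 : ∀ V : ℝ, V₀ < V → 1 < c * V / Real.sqrt (V ^ 2 + b ^ 2) := by
    intro V hV
    have hVpos : 0 < V := hV₀pos.trans hV
    have hu : 0 < V ^ 2 + b ^ 2 := by positivity
    have h1 : b < V * Real.sqrt (c ^ 2 - 1) := by
      rw [hV₀def, div_lt_iff₀ hsc] at hV; exact hV
    have h2 : Real.sqrt (c ^ 2 - 1) ^ 2 = c ^ 2 - 1 := Real.sq_sqrt hc2.le
    have hb2 : V ^ 2 + b ^ 2 < (c * V) ^ 2 := by nlinarith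
    have hlt : Real.sqrt (V ^ 2 + b ^ 2) < c * V := by
      rw [show c * V = Real.sqrt ((c * V) ^ 2) from
        (Real.sqrt_sq (by positivity)).symm]
      exact Real.sqrt_lt_sqrt hu.le hb2
    exact (one_lt_div (Real.sqrt_pos.mpr hu)).mpr hlt
  refine ⟨part1, ?_⟩
  -- g is concave on Ioi V₀
  have hderiv_g : ∀ V : ℝ, deriv (fun V : ℝ => c * V / Real.sqrt (V ^ 2 + b ^ 2)) V
      = c * b ^ 2 / ((V ^ 2 + b ^ 2) * Real.sqrt (V ^ 2 + b ^ 2)) :=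
    fun V => (hasDerivAt_gAux b c V hb).deriv
  have hconc_g : ConcaveOn ℝ (Set.Ioi V₀) (fun V : ℝ => c * V / Real.sqrt (V ^ 2 + b ^ 2)) := by
    apply AntitoneOn.concaveOn_of_deriv (convex_Ioi _)
    · exact fun V _ => (hasDerivAt_gAux b c V hb).continuousAt.continuousWithinAt
    · exact fun V _ => (hasDerivAt_gAux b c V hb).differentiableAt.differentiableWithinAt
    · rw [interior_Ioi]
      intro x hx y hy hxy
      rw [hderiv_g, hderiv_g]
      have hx0 : 0 < x := hV₀pos.trans hx
      have hy0 : 0 < y := hV₀pos.trans hy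
      have hcb : 0 < c * b ^ 2 := by positivity
      have hdx : (0:ℝ) < (x ^ 2 + b ^ 2) * Real.sqrt (x ^ 2 + b ^ 2) := by positivity
      have hx2 : x ^ 2 + b ^ 2 ≤ y ^ 2 + b ^ 2 := by nlinarith
      have hsq : Real.sqrt (x ^ 2 + b ^ 2) ≤ Real.sqrt (y ^ 2 + b ^ 2) :=
        Real.sqrt_le_sqrt hx2
      apply div_le_div_of_nonneg_left hcb.le hdx
      exact mul_le_mul hx2 hsq (Real.sqrt_nonneg _) (by positivity)
    all_goals try exact fun V _ => (hasDerivAt_gAux b c V hb).continuousAt.continuousWithinAt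
  -- h is continuous on Ioi 1 (from differentiability)
  have hcont_h : ContinuousOn (fun x : ℝ => ((x + 1) / 2) * Real.logb 2 ((x + 1) / 2)
      - ((x - 1) / 2) * Real.logb 2 ((x - 1) / 2)) (Set.Ioi 1) :=
    fun x hx => (hasDerivAt_hAux x hx).continuousAt.continuousWithinAt
  have hderiv_h : ∀ x ∈ Set.Ioi (1:ℝ), deriv (fun x : ℝ => ((x + 1) / 2) * Real.logb 2 ((x + 1) / 2)
      - ((x - 1) / 2) * Real.logb 2 ((x - 1) / 2)) x
      = (Real.log ((x + 1) / 2) - Real.log ((x - 1) / 2)) / (2 * Real.log 2) :=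
    fun x hx => (hasDerivAt_hAux x hx).deriv
  -- h is strictly monotone on Ioi 1
  have hmono_h : StrictMonoOn (fun x : ℝ => ((x + 1) / 2) * Real.logb 2 ((x + 1) / 2)
      - ((x - 1) / 2) * Real.logb 2 ((x - 1) / 2)) (Set.Ioi 1) := by
    apply strictMonoOn_of_deriv_pos (convex_Ioi _) hcont_h
    rw [interior_Ioi]
    intro x hx
    rw [hderiv_h x hx]
    have hx1 : (1:ℝ) < x := hx
    have hlog : Real.log ((x - 1) / 2) < Real.log ((x + 1) / 2) :=
      Real.log_lt_log (by linarith) (by linarith)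
    have h2 : (0:ℝ) < 2 * Real.log 2 := by
      have := Real.log_pos (by norm_num : (1:ℝ) < 2); linarith
    exact div_pos (by linarith) h2
  -- h is concave on Ioi 1
  have hconc_h : ConcaveOn ℝ (Set.Ioi 1) (fun x : ℝ => ((x + 1) / 2) * Real.logb 2 ((x + 1) / 2)
      - ((x - 1) / 2) * Real.logb 2 ((x - 1) / 2)) := by
    apply AntitoneOn.concaveOn_of_deriv (convex_Ioi _) hcont_h
    · exact fun x hx =>
        (hasDerivAt_hAux x (by rwa [interior_Ioi] at hx)).differentiableAt.differentiableWithinAt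
    · rw [interior_Ioi]
      intro x hx y hy hxy
      rw [hderiv_h x hx, hderiv_h y hy]
      have hx1 : (1:ℝ) < x := hx
      have hy1 : (1:ℝ) < y := hy
      have h2 : (0:ℝ) < 2 * Real.log 2 := by
        have := Real.log_pos (by norm_num : (1:ℝ) < 2); linarith
      rw [div_le_div_iff₀ h2 h2]
      have hnum : Real.log ((y + 1) / 2) - Real.log ((y - 1) / 2)
          ≤ Real.log ((x + 1) / 2) - Real.log ((x - 1) / 2) := by
        rw [logdiff_eq x hx1, logdiff_eq y hy1]
        apply Real.log_le_log (by apply div_pos <;> linarith)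
        rw [div_le_div_iff₀ (by linarith) (by linarith)]
        nlinarith
      nlinarith
  -- assemble
  refine ⟨convex_Ioi _, ?_⟩
  intro x hx y hy a a' ha ha' hab
  simp only [smul_eq_mul]
  have hgx : c * x / Real.sqrt (x ^ 2 + b ^ 2) ∈ Set.Ioi (1:ℝ) := part1 x hx
  have hgy : c * y / Real.sqrt (y ^ 2 + b ^ 2) ∈ Set.Ioi (1:ℝ) := part1 y hy
  have hz : a * x + a' * y ∈ Set.Ioi V₀ := by
    have := (convex_Ioi V₀) hx hy ha ha' hab
    simpa using this
  have hmem : a * (c * x / Real.sqrt (x ^ 2 + b ^ 2))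
      + a' * (c * y / Real.sqrt (y ^ 2 + b ^ 2)) ∈ Set.Ioi (1:ℝ) := by
    have := (convex_Ioi (1:ℝ)) hgx hgy ha ha' hab
    simpa using this
  have hgz : c * (a * x + a' * y) / Real.sqrt ((a * x + a' * y) ^ 2 + b ^ 2)
      ∈ Set.Ioi (1:ℝ) := part1 _ hz
  have hstep1 := hconc_h.2 hgx hgy ha ha' hab
  simp only [smul_eq_mul] at hstep1
  have hstep2 := hconc_g.2 hx hy ha ha' hab
  simp only [smul_eq_mul] at hstep2
  refine hstep1.trans ?_
  exact hmono_h.monotoneOn hmem hgz hstep2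
end

section
/- Let T ∈ (0,1), c > 0, γ > 0, W ≥ 0, δ² ≥ 0 be real constants. For V > 0 define b(V) = (T·c + γ)·V + (1−T)·W + δ², A(V) = c²V²(1−2T) + 2T + b(V)², B(V) = (T + (1−T)·c·V·W + c·V·(δ² + γ·V))², and λ₁(V) = √((A(V) + √(A(V)² − 4B(V)))/2). Then A(V)² − 4B(V) ≥ 0 for all V > 0, and lim_{V→∞} λ₁(V)/V = √((a + √(a² − 4c²γ²))/2), where a = c²(1−T)² + 2Tcγ + γ²; in particular a ≥ 2cγ, so a² − 4c²γ² ≥ 0 and the limit is a well-defined nonnegative real number. Hence λ₁(V)/V converges to a finite limit as the transmit power grows. -/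
open Filter

/-- Linear-growth asymptotics of the largest symplectic eigenvalue `λ₁` of the joint
covariance matrix of user `k` in the NOMA-CVQKD system, when the modulation variance
scales as `c·V` and the interference variance as `γ·V`: the discriminant
`A(V)² − 4B(V)` is nonnegative for all `V > 0`, `a ≥ 2cγ` (so the limit is a
well-defined nonnegative real), and `λ₁(V)/V → √((a + √(a² − 4c²γ²))/2)` as `V → ∞`,
where `a = c²(1−T)² + 2Tcγ + γ²`. -/
theorem stmt18 (T c γ W δ2 : ℝ) (hT : T ∈ Set.Ioo (0 : ℝ) 1) (hc : 0 < c)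
    (hγ : 0 < γ) (hW : 0 ≤ W) (hδ2 : 0 ≤ δ2)
    (b A B lam1 : ℝ → ℝ) (a : ℝ)
    (hb : ∀ V : ℝ, b V = (T * c + γ) * V + (1 - T) * W + δ2)
    (hA : ∀ V : ℝ, A V = c ^ 2 * V ^ 2 * (1 - 2 * T) + 2 * T + (b V) ^ 2)
    (hB : ∀ V : ℝ, B V = (T + (1 - T) * c * V * W + c * V * (δ2 + γ * V)) ^ 2)
    (hlam1 : ∀ V : ℝ, lam1 V = Real.sqrt ((A V + Real.sqrt ((A V) ^ 2 - 4 * B V)) / 2))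
    (ha : a = c ^ 2 * (1 - T) ^ 2 + 2 * T * c * γ + γ ^ 2) :
    (∀ V : ℝ, 0 < V → 0 ≤ (A V) ^ 2 - 4 * B V) ∧
    2 * c * γ ≤ a ∧
    Tendsto (fun V : ℝ => lam1 V / V) atTop
      (nhds (Real.sqrt ((a + Real.sqrt (a ^ 2 - 4 * c ^ 2 * γ ^ 2)) / 2))) := by
  obtain ⟨hT0, hT1⟩ := hT
  set q : ℝ := (1 - T) * W + δ2 with hq
  have hq0 : 0 ≤ q := by
    have : 0 ≤ (1 - T) * W := mul_nonneg (by linarith) hW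
    positivity
  -- part 1
  have part1 : ∀ V : ℝ, 0 < V → 0 ≤ (A V) ^ 2 - 4 * B V := by
    intro V hV
    set s : ℝ := T + (1 - T) * c * V * W + c * V * (δ2 + γ * V) with hs
    have hs0 : 0 < s := by
      have h1 : 0 ≤ (1 - T) * c * V * W :=
        mul_nonneg (mul_nonneg (mul_nonneg (by linarith) hc.le) hV.le) hW
      have h2 : 0 ≤ c * V * (δ2 + γ * V) := by positivity
      linarith
    have hdiff : A V - 2 * s = ((c * (1 - T) - γ) * V - q) ^ 2 := by
      rw [hA, hb, hq]; ring
    have hA2s : 2 * s ≤ A V := by nlinarith [sq_nonneg ((c * (1 - T) - γ) * V - q)]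
    have hBs : B V = s ^ 2 := by rw [hB]
    rw [hBs]
    nlinarith [mul_nonneg (by linarith : (0:ℝ) ≤ A V - 2 * s) (by linarith : (0:ℝ) ≤ A V + 2 * s)]
  refine ⟨part1, by nlinarith [sq_nonneg (c * (1 - T) - γ)], ?_⟩
  -- the limit
  set F : ℝ → ℝ := fun u => c ^ 2 * (1 - 2 * T) + 2 * T * u ^ 2 + ((T * c + γ) + q * u) ^ 2 with hF
  set H : ℝ → ℝ := fun u => (T * u ^ 2 + c * q * u + c * γ) ^ 2 with hH
  set G : ℝ → ℝ := fun u => Real.sqrt ((F u + Real.sqrt ((F u) ^ 2 - 4 * H u)) / 2) with hG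
  have hGcont : Continuous G := by
    apply Real.continuous_sqrt.comp
    apply Continuous.div_const
    apply Continuous.add (by fun_prop)
    exact Real.continuous_sqrt.comp (by fun_prop)
  have hkey : ∀ V : ℝ, 0 < V → lam1 V / V = G V⁻¹ := by
    intro V hV
    have hVne : V ≠ 0 := ne_of_gt hV
    have hAV : A V = V ^ 2 * F V⁻¹ := by
      rw [hA, hb, hF]; field_simp; ring
    have hBV : B V = V ^ 4 * H V⁻¹ := by
      rw [hB, hH]; field_simp; ring
    have hX : (A V) ^ 2 - 4 * B V = V ^ 4 * ((F V⁻¹) ^ 2 - 4 * H V⁻¹) := by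
      rw [hAV, hBV]; ring
    have hs4 : Real.sqrt (V ^ 4 * ((F V⁻¹) ^ 2 - 4 * H V⁻¹))
        = V ^ 2 * Real.sqrt ((F V⁻¹) ^ 2 - 4 * H V⁻¹) := by
      rw [Real.sqrt_mul (by positivity), show V ^ 4 = (V ^ 2) ^ 2 by ring,
        Real.sqrt_sq (by positivity)]
    rw [hlam1, hX, hs4, hAV, hG]
    have : (V ^ 2 * F V⁻¹ + V ^ 2 * Real.sqrt ((F V⁻¹) ^ 2 - 4 * H V⁻¹)) / 2
        = V ^ 2 * ((F V⁻¹ + Real.sqrt ((F V⁻¹) ^ 2 - 4 * H V⁻¹)) / 2) := by ring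
    rw [this, Real.sqrt_mul (by positivity), show V ^ 2 = V * V by ring,
      Real.sqrt_mul_self (le_of_lt hV)]
    field_simp
  have hG0 : G 0 = Real.sqrt ((a + Real.sqrt (a ^ 2 - 4 * c ^ 2 * γ ^ 2)) / 2) := by
    have hF0 : F 0 = a := by simp [hF, ha]; ring
    have hH0 : H 0 = c ^ 2 * γ ^ 2 := by simp [hH]; ring
    rw [hG]; simp only [hF0, hH0]; ring_nf
  have hten : Tendsto (fun V : ℝ => G V⁻¹) atTop (nhds (G 0)) :=
    (hGcont.continuousAt.tendsto).comp tendsto_inv_atTop_zero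
  rw [← hG0]
  refine hten.congr' ?_
  filter_upwards [eventually_gt_atTop (0 : ℝ)] with V hV
  exact (hkey V hV).symm
end

section
/- Let T ∈ (0,1), c > 0, W ≥ 0, δ² ≥ 0 be real constants with m := (1−T)·W + δ² > 0. For V > 0 define b(V) = T·c·V + m, A(V) = c²V²(1−2T) + 2T + b(V)², B(V) = (T + (1−T)·c·V·W + c·V·δ²)², and λ₂(V) = √((A(V) − √(A(V)² − 4B(V)))/2). Then A(V)² − 4B(V) ≥ 0 for all V > 0, and lim_{V→∞} λ₂(V) = m/(1−T) = ((1−T)·W + δ²)/(1−T). That is, the smaller symplectic eigenvalue converges to a finite constant as the transmit power grows. -/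
open Filter

/-- Constant-limit asymptotics of the smaller symplectic eigenvalue `λ₂` of the joint
covariance matrix of the interference-free user (`V_I = 0`) in the NOMA-CVQKD system,
when the modulation variance scales as `c·V`: the discriminant `A(V)² − 4B(V)` is
nonnegative for all `V > 0`, and `λ₂(V) → m/(1−T) = ((1−T)W + δ²)/(1−T)` as
`V → ∞`. -/
theorem stmt19 (T c W δ2 m : ℝ) (hT : T ∈ Set.Ioo (0 : ℝ) 1) (hc : 0 < c)
    (hW : 0 ≤ W) (hδ2 : 0 ≤ δ2) (hm : m = (1 - T) * W + δ2) (hm0 : 0 < m)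
    (b A B lam2 : ℝ → ℝ)
    (hb : ∀ V : ℝ, b V = T * c * V + m)
    (hA : ∀ V : ℝ, A V = c ^ 2 * V ^ 2 * (1 - 2 * T) + 2 * T + (b V) ^ 2)
    (hB : ∀ V : ℝ, B V = (T + (1 - T) * c * V * W + c * V * δ2) ^ 2)
    (hlam2 : ∀ V : ℝ,
      lam2 V = Real.sqrt ((A V - Real.sqrt ((A V) ^ 2 - 4 * B V)) / 2)) :
    (∀ V : ℝ, 0 < V → 0 ≤ (A V) ^ 2 - 4 * B V) ∧
    Tendsto lam2 atTop (nhds (m / (1 - T))) := by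
  obtain ⟨hT0, hT1⟩ := hT
  have h1T : 0 < 1 - T := by linarith
  -- the discriminant factors
  have hfact : ∀ V : ℝ, (A V) ^ 2 - 4 * B V
      = ((1 - T) * (c * V) - m) ^ 2 *
        (((1 - T) * (c * V) + m) ^ 2 + 4 * T * (m * (c * V) + 1)) := by
    intro V
    rw [hA, hB, hb, hm]
    ring
  have hdisc : ∀ V : ℝ, 0 < V → 0 ≤ (A V) ^ 2 - 4 * B V := by
    intro V hV
    rw [hfact V]
    have hx : 0 < c * V := mul_pos hc hV
    have h2 : 0 ≤ ((1 - T) * (c * V) + m) ^ 2 + 4 * T * (m * (c * V) + 1) := by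
      nlinarith [sq_nonneg ((1 - T) * (c * V) + m), mul_pos hm0 hx]
    exact mul_nonneg (sq_nonneg _) h2
  refine ⟨hdisc, ?_⟩
  -- A in normalized form, positivity for V > 0
  have hApos : ∀ V : ℝ, 0 < V → 0 < A V := by
    intro V hV
    rw [hA, hb]
    nlinarith [sq_nonneg ((1 - T) * (c * V)), mul_pos (mul_pos hT0 hm0) (mul_pos hc hV), hT0]
  -- lam2 as sqrt(2B/(A+√D)) for V > 0
  have hlam2' : ∀ V : ℝ, 0 < V →
      lam2 V = Real.sqrt (2 * B V / (A V + Real.sqrt ((A V) ^ 2 - 4 * B V))) := by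
    intro V hV
    rw [hlam2 V]
    congr 1
    have hD := hdisc V hV
    have hs : 0 ≤ Real.sqrt ((A V) ^ 2 - 4 * B V) := Real.sqrt_nonneg _
    have hden : 0 < A V + Real.sqrt ((A V) ^ 2 - 4 * B V) := by
      have := hApos V hV; linarith
    have hsq : (Real.sqrt ((A V) ^ 2 - 4 * B V)) ^ 2 = (A V) ^ 2 - 4 * B V :=
      Real.sq_sqrt hD
    field_simp
    nlinarith [hsq]
  -- limits
  have hinv : Tendsto (fun V : ℝ => V⁻¹) atTop (nhds 0) := tendsto_inv_atTop_zero
  have hAlim : Tendsto (fun V => A V * (V⁻¹) ^ 2) atTop (nhds ((1 - T) ^ 2 * c ^ 2)) := by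
    have hcont : Continuous fun t : ℝ =>
        (1 - T) ^ 2 * c ^ 2 + 2 * T * m * c * t + (m ^ 2 + 2 * T) * t ^ 2 := by fun_prop
    have h0 := hcont.tendsto 0
    have h0' : Tendsto (fun V : ℝ =>
        (1 - T) ^ 2 * c ^ 2 + 2 * T * m * c * V⁻¹ + (m ^ 2 + 2 * T) * (V ^ 2)⁻¹)
        atTop (nhds ((1 - T) ^ 2 * c ^ 2)) := by
      have := h0.comp hinv
      simpa [Function.comp_def] using this
    refine h0'.congr' ?_
    filter_upwards [eventually_gt_atTop (0 : ℝ)] with V hV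
    rw [hA V, hb V]
    have hV0 : V ≠ 0 := ne_of_gt hV
    field_simp
    ring
  have hBlim2 : Tendsto (fun V => B V * (V⁻¹) ^ 2) atTop (nhds (m ^ 2 * c ^ 2)) := by
    have hcont : Continuous fun t : ℝ => (T * t + m * c) ^ 2 := by fun_prop
    have h0 := hcont.tendsto 0
    have h0' : Tendsto (fun V : ℝ => (T * V⁻¹ + m * c) ^ 2) atTop (nhds (m ^ 2 * c ^ 2)) := by
      have := h0.comp hinv
      simpa [Function.comp_def, mul_pow, mul_comm] using this
    refine h0'.congr' ?_
    filter_upwards [eventually_gt_atTop (0 : ℝ)] with V hV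
    rw [hB V, hm]
    have hV0 : V ≠ 0 := ne_of_gt hV
    field_simp
    ring
  have hBlim4 : Tendsto (fun V => B V * (V⁻¹) ^ 4) atTop (nhds 0) := by
    have h2 : Tendsto (fun V : ℝ => (B V * (V⁻¹) ^ 2) * (V⁻¹) ^ 2) atTop (nhds 0) := by
      simpa using hBlim2.mul (hinv.pow 2)
    exact h2.congr fun V => by ring
  have hDlim : Tendsto (fun V => ((A V) ^ 2 - 4 * B V) * (V⁻¹) ^ 4) atTop
      (nhds ((1 - T) ^ 4 * c ^ 4)) := by
    have h1 : Tendsto (fun V => (A V * (V⁻¹) ^ 2) * (A V * (V⁻¹) ^ 2) - 4 * (B V * (V⁻¹) ^ 4))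
        atTop (nhds ((1 - T) ^ 2 * c ^ 2 * ((1 - T) ^ 2 * c ^ 2) - 4 * 0)) :=
      (hAlim.mul hAlim).sub (hBlim4.const_mul 4)
    have : ((1 - T) ^ 2 * c ^ 2 * ((1 - T) ^ 2 * c ^ 2) - 4 * 0) = (1 - T) ^ 4 * c ^ 4 := by
      ring
    rw [this] at h1
    refine h1.congr fun V => by ring
  have hsqrtD : Tendsto (fun V => Real.sqrt ((A V) ^ 2 - 4 * B V) * (V⁻¹) ^ 2) atTop
      (nhds ((1 - T) ^ 2 * c ^ 2)) := by
    have h1 : Tendsto (fun V => Real.sqrt (((A V) ^ 2 - 4 * B V) * (V⁻¹) ^ 4)) atTop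
        (nhds (Real.sqrt ((1 - T) ^ 4 * c ^ 4))) := hDlim.sqrt
    have hval : Real.sqrt ((1 - T) ^ 4 * c ^ 4) = (1 - T) ^ 2 * c ^ 2 := by
      rw [show (1 - T) ^ 4 * c ^ 4 = ((1 - T) ^ 2 * c ^ 2) ^ 2 by ring]
      exact Real.sqrt_sq (by positivity)
    rw [hval] at h1
    refine h1.congr' ?_
    filter_upwards [eventually_gt_atTop (0 : ℝ)] with V hV
    rw [show ((A V) ^ 2 - 4 * B V) * (V⁻¹) ^ 4 = ((A V) ^ 2 - 4 * B V) * ((V⁻¹) ^ 2) ^ 2 by ring,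
      Real.sqrt_mul (hdisc V hV), Real.sqrt_sq (by positivity)]
  have hden : Tendsto (fun V => (A V + Real.sqrt ((A V) ^ 2 - 4 * B V)) * (V⁻¹) ^ 2) atTop
      (nhds (2 * ((1 - T) ^ 2 * c ^ 2))) := by
    have h1 := hAlim.add hsqrtD
    have : (1 - T) ^ 2 * c ^ 2 + (1 - T) ^ 2 * c ^ 2 = 2 * ((1 - T) ^ 2 * c ^ 2) := by ring
    rw [this] at h1
    refine h1.congr fun V => by ring
  have hdenne : (2 : ℝ) * ((1 - T) ^ 2 * c ^ 2) ≠ 0 := by positivity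
  have hf : Tendsto (fun V => 2 * B V / (A V + Real.sqrt ((A V) ^ 2 - 4 * B V))) atTop
      (nhds ((m / (1 - T)) ^ 2)) := by
    have h1 : Tendsto (fun V => (2 * (B V * (V⁻¹) ^ 2)) /
        ((A V + Real.sqrt ((A V) ^ 2 - 4 * B V)) * (V⁻¹) ^ 2)) atTop
        (nhds (2 * (m ^ 2 * c ^ 2) / (2 * ((1 - T) ^ 2 * c ^ 2)))) :=
      (hBlim2.const_mul 2).div hden hdenne
    have hval : 2 * (m ^ 2 * c ^ 2) / (2 * ((1 - T) ^ 2 * c ^ 2)) = (m / (1 - T)) ^ 2 := by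
      field_simp
    rw [hval] at h1
    refine h1.congr' ?_
    filter_upwards [eventually_gt_atTop (0 : ℝ)] with V hV
    have hV2 : ((V : ℝ)⁻¹) ^ 2 ≠ 0 := by positivity
    rw [show 2 * (B V * (V⁻¹) ^ 2) = (2 * B V) * (V⁻¹) ^ 2 from by ring,
      mul_div_mul_right _ _ hV2]
  have hfinal := hf.sqrt
  have hval : Real.sqrt ((m / (1 - T)) ^ 2) = m / (1 - T) :=
    Real.sqrt_sq (by positivity)
  rw [hval] at hfinal
  refine hfinal.congr' ?_
  filter_upwards [eventually_gt_atTop (0 : ℝ)] with V hV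
  exact (hlam2' V hV).symm
end
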